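/- Invariance of signature prefixes under passing to subtrees along clean paths: if Σ is a winning strategy of P in G(t), u ∈ Σ, j is a P-losing number, and no strict prefix w of u has t(w) equal to ~ or to a priority symbol p_{j'} with j' < j, then s(ε, Σ↾u)↾j = s(u, Σ)↾j. -/
import Mathlib


namespace UnambSig

/-- The symbols of the alphabet `A^~_{i,k}`: unary priority symbols `p j`,
binary choice symbols of the two players (`true` is player 1), and the unary
player-swapping symbol `~`. -/
inductive Sym where
  | pri : ℕ → Sym
  | choice : Bool → Sym
  | neg : Sym
deriving DecidableEq

/-- Arity of a symbol. -/
def Sym.arity : Sym → ℕ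
  | .pri _ => 1
  | .choice _ => 2
  | .neg => 1

/-- A labelling of potential tree nodes (lists of directions, from the root). -/
abbrev Label := List ℕ → Option Sym

/-- `t` is a tree over the alphabet `A^~_{i,k}`: the root is defined, children
match arities, the domain is closed and priorities are within `{i,…,k}`. -/
def IsTree (t : Label) (i k : ℕ) : Prop :=
  t [] ≠ none ∧
  (∀ u s, t u = some s → ∀ d : ℕ, (t (u ++ [d]) ≠ none ↔ d < s.arity)) ∧
  (∀ u (d : ℕ), t u = none → t (u ++ [d]) = none) ∧
  (∀ u j, t u = some (Sym.pri j) → i ≤ j ∧ j ≤ k)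

/-- The number of strict ancestors of `u` labelled by `~`. -/
def tildeCount (t : Label) (u : List ℕ) : ℕ :=
  (List.range u.length).countP (fun m => decide (t (u.take m) = some Sym.neg))

/-- A node is kept if it has an even number of `~`-labelled strict ancestors. -/
def kept (t : Label) (u : List ℕ) : Prop := tildeCount t u % 2 = 0

instance (t : Label) (u : List ℕ) : Decidable (kept t u) := by
  unfold kept; infer_instance

/-- The node of a branch `α` at depth `n`. -/
def pref (α : ℕ → ℕ) (n : ℕ) : List ℕ := (List.range n).map α

/-- `α` is an infinite branch of `t`. -/
def IsBranch (t : Label) (α : ℕ → ℕ) : Prop := ∀ n, t (pref α n) ≠ none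

/-- `t` is well-formed: no branch contains infinitely many `~`. -/
def WellFormed (t : Label) : Prop :=
  ∀ α : ℕ → ℕ, IsBranch t α → {n : ℕ | t (pref α n) = some Sym.neg}.Finite

/-- `t` is a well-formed tree over `A^~_{i,k}`. -/
def GoodTree (t : Label) (i k : ℕ) : Prop := IsTree t i k ∧ WellFormed t

/-- The effective priority of a node: the labelled priority, shifted by one at
switched nodes (each `~` swaps the players). -/
def effPri (t : Label) (u : List ℕ) : Option ℕ :=
  match t u with
  | some (Sym.pri j) => some (if kept t u then j else j + 1)
  | _ => none

/-- The player controlling a node: the player named by the choice symbol,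
swapped if the node is switched. -/
def ctrl (t : Label) (u : List ℕ) : Option Bool :=
  match t u with
  | some (Sym.choice Q) => some (if kept t u then Q else !Q)
  | _ => none

/-- The effective priority `j` appears infinitely often on the branch `α`. -/
def InfOften (t : Label) (α : ℕ → ℕ) (j : ℕ) : Prop :=
  {n : ℕ | effPri t (pref α n) = some j}.Infinite

/-- The branch `α` is winning for player `P` in the game `G(t)`: the least
effective priority occurring infinitely often has the parity favourable to `P`
(even for player 1 = `true`). -/
def WinsBranch (t : Label) (P : Bool) (α : ℕ → ℕ) : Prop :=
  ∃ j, InfOften t α j ∧ (∀ j' < j, ¬ InfOften t α j') ∧ (Even j ↔ P = true)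

/-- A strategy of player `P` in `G(t)`, identified (since the arena is a tree)
with a prefix-closed set of nodes: deterministic at `P`'s positions and full at
the other positions. -/
def IsStrategy (t : Label) (P : Bool) (S : List ℕ → Prop) : Prop :=
  S [] ∧
  (∀ u, S u → t u ≠ none) ∧
  (∀ u (d : ℕ), S (u ++ [d]) → S u) ∧
  (∀ u, S u → ctrl t u = some P → ∃! d : ℕ, S (u ++ [d])) ∧
  (∀ u (d : ℕ), S u → ctrl t u ≠ some P → t (u ++ [d]) ≠ none → S (u ++ [d]))

/-- An infinite play of `S`: a branch all of whose prefixes belong to `S`. -/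
def IsPlayOf (S : List ℕ → Prop) (α : ℕ → ℕ) : Prop := ∀ n, S (pref α n)

/-- A winning strategy of `P`: all its infinite plays are winning for `P`. -/
def IsWinningStrategy (t : Label) (P : Bool) (S : List ℕ → Prop) : Prop :=
  IsStrategy t P S ∧ ∀ α, IsPlayOf S α → WinsBranch t P α

/-- `j` is a `P`-losing priority: within `{i,…,k}` and of the parity
unfavourable to `P` (odd for player 1 = `true`). -/
def PLosing (i k : ℕ) (P : Bool) (j : ℕ) : Prop :=
  i ≤ j ∧ j ≤ k ∧ (Odd j ↔ P = true)

/-- `j` is a `P`-winning priority. -/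
def PWinning (i k : ℕ) (P : Bool) (j : ℕ) : Prop :=
  i ≤ j ∧ j ≤ k ∧ ¬ (Odd j ↔ P = true)

/-- A position `u` of the strategy `S` is active: it carries a `P`-losing
priority `j` and no strict ancestor is labelled `~` or by a smaller priority. -/
def Active (t : Label) (i k : ℕ) (P : Bool) (S : List ℕ → Prop) (u : List ℕ) : Prop :=
  S u ∧ ∃ j, t u = some (Sym.pri j) ∧ PLosing i k P j ∧
    ∀ w, w <+: u → w ≠ u →
      (t w ≠ some Sym.neg ∧ ∀ j', t w = some (Sym.pri j') → j ≤ j')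

/-- `w` is a `⪯`-minimal active position above `u` (an element of `suk_u(Σ)`). -/
def Suk (t : Label) (i k : ℕ) (P : Bool) (S : List ℕ → Prop) (u w : List ℕ) : Prop :=
  Active t i k P S w ∧ u <+: w ∧
    ∀ w', Active t i k P S w' → u <+: w' → w' <+: w → w' = w

/-- The relation `u ≫ w` associated with the strategy `S`. -/
def Gg (t : Label) (i k : ℕ) (P : Bool) (S : List ℕ → Prop) (u w : List ℕ) : Prop :=
  S u ∧ S w ∧ u <+: w ∧ u ≠ w ∧
    ∃ w', Active t i k P S w' ∧ u <+: w' ∧ w' <+: w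

/-- Lexicographic strict order on `P`-signatures (tuples of ordinals indexed by
the `P`-losing priorities; smaller indices are more significant). -/
def sigLt (i k : ℕ) (P : Bool) (σ τ : ℕ → Ordinal) : Prop :=
  ∃ j, PLosing i k P j ∧ σ j < τ j ∧
    ∀ j', PLosing i k P j' → j' < j → σ j' = τ j'

/-- Equality of `P`-signatures (on the relevant coordinates). -/
def sigEq (i k : ℕ) (P : Bool) (σ τ : ℕ → Ordinal) : Prop :=
  ∀ j, PLosing i k P j → σ j = τ j

/-- Lexicographic order on `P`-signatures. -/
def sigLe (i k : ℕ) (P : Bool) (σ τ : ℕ → Ordinal) : Prop :=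
  sigLt i k P σ τ ∨ sigEq i k P σ τ

/-- Lexicographic strict order on prefixes `σ↾ℓ` of `P`-signatures. -/
def sigLtBelow (i k : ℕ) (P : Bool) (ℓ : ℕ) (σ τ : ℕ → Ordinal) : Prop :=
  ∃ j, PLosing i k P j ∧ j ≤ ℓ ∧ σ j < τ j ∧
    ∀ j', PLosing i k P j' → j' < j → σ j' = τ j'

/-- Equality of the prefixes `σ↾ℓ`. -/
def sigEqBelow (i k : ℕ) (P : Bool) (ℓ : ℕ) (σ τ : ℕ → Ordinal) : Prop :=
  ∀ j, PLosing i k P j → j ≤ ℓ → σ j = τ j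

/-- Lexicographic order on the prefixes `σ↾ℓ`. -/
def sigLeBelow (i k : ℕ) (P : Bool) (ℓ : ℕ) (σ τ : ℕ → Ordinal) : Prop :=
  sigLtBelow i k P ℓ σ τ ∨ sigEqBelow i k P ℓ σ τ

/-- Order on signatures extended by `∞` (represented by `none`) as maximum. -/
def extLe (i k : ℕ) (P : Bool) : Option (ℕ → Ordinal) → Option (ℕ → Ordinal) → Prop
  | _, none => True
  | none, some _ => False
  | some σ, some τ => sigLe i k P σ τ

/-- Equality of signatures extended by `∞`. -/
def extEq (i k : ℕ) (P : Bool) : Option (ℕ → Ordinal) → Option (ℕ → Ordinal) → Prop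
  | none, none => True
  | some σ, some τ => sigEq i k P σ τ
  | _, _ => False

/-- Order on prefixes `σ↾ℓ` of signatures extended by `∞`. -/
def extLeBelow (i k : ℕ) (P : Bool) (ℓ : ℕ) :
    Option (ℕ → Ordinal) → Option (ℕ → Ordinal) → Prop
  | _, none => True
  | none, some _ => False
  | some σ, some τ => sigLeBelow i k P ℓ σ τ

/-- Strict order on prefixes `σ↾ℓ` of signatures extended by `∞`. -/
def extLtBelow (i k : ℕ) (P : Bool) (ℓ : ℕ) :
    Option (ℕ → Ordinal) → Option (ℕ → Ordinal) → Prop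
  | none, _ => False
  | some _, none => True
  | some σ, some τ => sigLtBelow i k P ℓ σ τ

/-- `s` is the signature assignment `s(·,Σ)` of the strategy `S`: at an active
node with priority `j`, the coordinate `j` of the child's value is incremented
by one and the later coordinates are zeroed; at a non-active node of `S`, the
value is the least upper bound (in the lexicographic order) of the values at
the `⪯`-minimal active descendants. -/
def SigDef (t : Label) (i k : ℕ) (P : Bool) (S : List ℕ → Prop)
    (s : List ℕ → ℕ → Ordinal) : Prop :=
  (∀ u j, Active t i k P S u → t u = some (Sym.pri j) →
    ∀ j', PLosing i k P j' →
      (j' < j → s u j' = s (u ++ [0]) j') ∧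
      (j' = j → s u j' = s (u ++ [0]) j + 1) ∧
      (j < j' → s u j' = 0)) ∧
  (∀ u, S u → ¬ Active t i k P S u →
    (∀ w, Suk t i k P S u w → sigLe i k P (s w) (s u)) ∧
    (∀ τ, (∀ w, Suk t i k P S u w → sigLe i k P (s w) τ) → sigLe i k P (s u) τ))

/-- The subtree of `t` rooted at `u`. -/
def subtree (t : Label) (u : List ℕ) : Label := fun w => t (u ++ w)

/-- The tree with a unary root symbol `s` and subtree `t`. -/
def node1 (s : Sym) (t : Label) : Label := fun u =>
  match u with
  | [] => some s
  | 0 :: w => t w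
  | _ => none

/-- The tree with root the binary choice symbol of player `b` and the given
left and right subtrees. -/
def node2 (b : Bool) (tL tR : Label) : Label := fun u =>
  match u with
  | [] => some (Sym.choice b)
  | 0 :: w => tL w
  | 1 :: w => tR w
  | _ => none

/-- `σ` is the value `s(ε,Σ)` of some winning strategy `Σ` of `P` in `G(t)`. -/
def ValOf (t : Label) (i k : ℕ) (P : Bool) (σ : ℕ → Ordinal) : Prop :=
  ∃ (S : List ℕ → Prop) (s : List ℕ → ℕ → Ordinal),
    IsWinningStrategy t P S ∧ SigDef t i k P S s ∧ sigEq i k P σ (s [])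

/-- `σ` is the signature `σ_P(t)`: the lexicographic infimum (= minimum) of the
values of the winning strategies of `P` in `G(t)`. -/
def IsSigOf (t : Label) (i k : ℕ) (P : Bool) (σ : ℕ → Ordinal) : Prop :=
  ValOf t i k P σ ∧ ∀ τ, ValOf t i k P τ → sigLe i k P σ τ

/-- `a` is the extended signature `σ_P(t)`, with `none` representing `∞`
(no winning strategy of `P` exists). -/
def IsExtSigOf (t : Label) (i k : ℕ) (P : Bool) : Option (ℕ → Ordinal) → Prop
  | none => ¬ ∃ S : List ℕ → Prop, IsWinningStrategy t P S
  | some σ => IsSigOf t i k P σ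

/-- The six invariants of the signature lemma for a pair of assignments
`σ' : Bool → Label → Option (ℕ → Ordinal)` (with `none` playing the role of
`∞`): (1) `σ'_P(t) = ∞` iff `P` loses `G(t)`; (2) `σ'_P(~(t)) = (0,…,0)` if `P`
wins `G(~(t))`; (3) prepending a `P`-winning priority `j` keeps the coordinates
below `j` and zeroes the ones `≥ j`; (4) prepending a `P`-losing priority `j`
increments coordinate `j` and zeroes the later ones; (5) the min rule at `P`'s
choice nodes; (6) the max rule at the opponent's choice nodes. -/
def SigInvariants (i k : ℕ) (σ' : Bool → Label → Option (ℕ → Ordinal)) : Prop :=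
  (∀ (P : Bool) (t : Label), GoodTree t i k →
    (σ' P t = none ↔ ¬ ∃ S : List ℕ → Prop, IsWinningStrategy t P S)) ∧
  (∀ (P : Bool) (t : Label), GoodTree t i k →
    (∃ S : List ℕ → Prop, IsWinningStrategy (node1 Sym.neg t) P S) →
    ∃ τ, σ' P (node1 Sym.neg t) = some τ ∧ ∀ j, PLosing i k P j → τ j = 0) ∧
  (∀ (P : Bool) (t : Label) (j : ℕ) (τ : ℕ → Ordinal), GoodTree t i k →
    PWinning i k P j → σ' P t = some τ →
    ∃ τ', σ' P (node1 (Sym.pri j) t) = some τ' ∧ ∀ j', PLosing i k P j' →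
      (j' < j → τ' j' = τ j') ∧ (j ≤ j' → τ' j' = 0)) ∧
  (∀ (P : Bool) (t : Label) (j : ℕ) (τ : ℕ → Ordinal), GoodTree t i k →
    PLosing i k P j → σ' P t = some τ →
    ∃ τ', σ' P (node1 (Sym.pri j) t) = some τ' ∧ ∀ j', PLosing i k P j' →
      (j' < j → τ' j' = τ j') ∧ (j' = j → τ' j' = τ j + 1) ∧ (j < j' → τ' j' = 0)) ∧
  (∀ (P : Bool) (tL tR : Label), GoodTree tL i k → GoodTree tR i k →
    (extLe i k P (σ' P tL) (σ' P tR) →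
      extEq i k P (σ' P (node2 P tL tR)) (σ' P tL)) ∧
    (extLe i k P (σ' P tR) (σ' P tL) →
      extEq i k P (σ' P (node2 P tL tR)) (σ' P tR))) ∧
  (∀ (P : Bool) (tL tR : Label), GoodTree tL i k → GoodTree tR i k →
    (extLe i k P (σ' P tL) (σ' P tR) →
      extEq i k P (σ' P (node2 (!P) tL tR)) (σ' P tR)) ∧
    (extLe i k P (σ' P tR) (σ' P tL) →
      extEq i k P (σ' P (node2 (!P) tL tR)) (σ' P tL)))

/-- `S` is a `σ'`-optimal strategy of `P` in `G(t)`: at each position controlled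
by `P` it moves to a subtree of lexicographically minimal `σ'`-value for the
appropriate player (depending on whether the position is kept or switched). -/
def IsOptimal (t : Label) (i k : ℕ) (P : Bool)
    (σ' : Bool → Label → Option (ℕ → Ordinal)) (S : List ℕ → Prop) : Prop :=
  IsStrategy t P S ∧
  ∀ u (d : ℕ), S u → ctrl t u = some P → S (u ++ [d]) →
    ∀ d' : ℕ, t (u ++ [d']) ≠ none →
      extLe i k (if kept t u then P else !P)
        (σ' (if kept t u then P else !P) (subtree t (u ++ [d])))
        (σ' (if kept t u then P else !P) (subtree t (u ++ [d'])))

/-- A partial strategy of `P`: a `P`-deterministic behaviour (nonempty,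
prefix-closed, without maximal elements, deterministic at `P`'s positions). -/
def IsPartialStrategy (t : Label) (P : Bool) (S : List ℕ → Prop) : Prop :=
  S [] ∧
  (∀ u, S u → t u ≠ none) ∧
  (∀ u (d : ℕ), S (u ++ [d]) → S u) ∧
  (∀ u, S u → ctrl t u = some P → ∃! d : ℕ, S (u ++ [d])) ∧
  (∀ u, S u → ∃ d : ℕ, S (u ++ [d]))

/-- The position `u` is not reachable by the partial strategy `S` of `P`: it is
a child, outside `S`, of an opponent position of `S`. -/
def NotReachable (t : Label) (P : Bool) (S : List ℕ → Prop) (u : List ℕ) : Prop :=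
  ∃ (w : List ℕ) (d : ℕ), u = w ++ [d] ∧ S w ∧ ¬ S u ∧ t u ≠ none ∧ ctrl t w = some (!P)


/-! ### Auxiliary material for the signature-prefix invariance theorem -/

section AuxOrder

variable {i k : ℕ} {P : Bool} {j : ℕ}

theorem eqB_symm {σ τ : ℕ → Ordinal} (h : sigEqBelow i k P j σ τ) :
    sigEqBelow i k P j τ σ := fun j' h1 h2 => (h j' h1 h2).symm

theorem leB_of_eqB {σ τ : ℕ → Ordinal} (h : sigEqBelow i k P j σ τ) :
    sigLeBelow i k P j σ τ := Or.inr h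

theorem leB_of_le {σ τ : ℕ → Ordinal} (h : sigLe i k P σ τ) :
    sigLeBelow i k P j σ τ := by
  rcases h with ⟨j1, hlos, hlt, hbel⟩ | he
  · by_cases hle : j1 ≤ j
    · exact Or.inl ⟨j1, hlos, hle, hlt, hbel⟩
    · exact Or.inr (fun j' h1 h2 => hbel j' h1 (by omega))
  · exact Or.inr (fun j' h1 _ => he j' h1)

theorem eqB_leB_left {σ σ' τ : ℕ → Ordinal} (h : sigEqBelow i k P j σ σ')
    (h2 : sigLeBelow i k P j σ τ) : sigLeBelow i k P j σ' τ := by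
  rcases h2 with ⟨j1, hlos, hle, hlt, hbel⟩ | he
  · exact Or.inl ⟨j1, hlos, hle, by rw [← h j1 hlos hle]; exact hlt,
      fun j'' h1 h2 => by rw [← h j'' h1 (by omega)]; exact hbel j'' h1 h2⟩
  · exact Or.inr (fun j' h1 h2 => by rw [← h j' h1 h2]; exact he j' h1 h2)

theorem eqB_leB_right {σ τ τ' : ℕ → Ordinal} (h : sigEqBelow i k P j τ τ')
    (h2 : sigLeBelow i k P j σ τ) : sigLeBelow i k P j σ τ' := by
  rcases h2 with ⟨j1, hlos, hle, hlt, hbel⟩ | he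
  · exact Or.inl ⟨j1, hlos, hle, by rw [← h j1 hlos hle]; exact hlt,
      fun j'' h1 h2 => by rw [← h j'' h1 (by omega)]; exact hbel j'' h1 h2⟩
  · exact Or.inr (fun j' h1 h2 => by rw [← h j' h1 h2]; exact he j' h1 h2)

theorem leB_trans {σ τ ρ : ℕ → Ordinal} (h1 : sigLeBelow i k P j σ τ)
    (h2 : sigLeBelow i k P j τ ρ) : sigLeBelow i k P j σ ρ := by
  rcases h1 with ⟨j1, hl1, hle1, hlt1, hb1⟩ | he1
  · rcases h2 with ⟨j2, hl2, hle2, hlt2, hb2⟩ | he2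
    · rcases lt_trichotomy j1 j2 with h | h | h
      · exact Or.inl ⟨j1, hl1, hle1, by rw [← hb2 j1 hl1 h]; exact hlt1,
          fun j' hl hlt => (hb1 j' hl hlt).trans (hb2 j' hl (by omega))⟩
      · subst h
        exact Or.inl ⟨j1, hl1, hle1, hlt1.trans hlt2,
          fun j' hl hlt => (hb1 j' hl hlt).trans (hb2 j' hl hlt)⟩
      · exact Or.inl ⟨j2, hl2, hle2, by rw [hb1 j2 hl2 h]; exact hlt2,
          fun j' hl hlt => (hb1 j' hl (by omega)).trans (hb2 j' hl hlt)⟩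
    · exact Or.inl ⟨j1, hl1, hle1, by rw [← he2 j1 hl1 hle1]; exact hlt1,
        fun j' hl hlt => (hb1 j' hl hlt).trans (he2 j' hl (by omega))⟩
  · rcases h2 with ⟨j2, hl2, hle2, hlt2, hb2⟩ | he2
    · exact Or.inl ⟨j2, hl2, hle2, by rw [he1 j2 hl2 hle2]; exact hlt2,
        fun j' hl hlt => (he1 j' hl (by omega)).trans (hb2 j' hl hlt)⟩
    · exact Or.inr (fun j' hl hle => (he1 j' hl hle).trans (he2 j' hl hle))

theorem leB_antisymm {σ τ : ℕ → Ordinal} (h1 : sigLeBelow i k P j σ τ)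
    (h2 : sigLeBelow i k P j τ σ) : sigEqBelow i k P j σ τ := by
  rcases h1 with ⟨j1, hl1, hle1, hlt1, hb1⟩ | he1
  · exfalso
    rcases h2 with ⟨j2, hl2, hle2, hlt2, hb2⟩ | he2
    · rcases lt_trichotomy j1 j2 with h | h | h
      · rw [hb2 j1 hl1 h] at hlt1; exact lt_irrefl _ hlt1
      · subst h; exact lt_irrefl _ (hlt1.trans hlt2)
      · rw [hb1 j2 hl2 h] at hlt2; exact lt_irrefl _ hlt2
    · rw [he2 j1 hl1 hle1] at hlt1; exact lt_irrefl _ hlt1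
  · rcases h2 with ⟨j2, hl2, hle2, hlt2, hb2⟩ | he2
    · exfalso; rw [he1 j2 hl2 hle2] at hlt2; exact lt_irrefl _ hlt2
    · exact he1

theorem sigLe_patch {σ τ' : ℕ → Ordinal} {Λ : Ordinal}
    (hΛ : ∀ j', PLosing i k P j' → j < j' → σ j' < Λ)
    (h : sigLeBelow i k P j σ τ') :
    sigLe i k P σ (fun j' => if j' ≤ j then τ' j' else Λ) := by
  classical
  rcases h with ⟨j1, hl1, hle1, hlt1, hb1⟩ | he
  · refine Or.inl ⟨j1, hl1, ?_, ?_⟩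
    · show σ j1 < if j1 ≤ j then τ' j1 else Λ
      rw [if_pos hle1]; exact hlt1
    · intro j'' hl hlt
      show σ j'' = if j'' ≤ j then τ' j'' else Λ
      rw [if_pos (show j'' ≤ j by omega)]
      exact hb1 j'' hl hlt
  · by_cases hex : ∃ j', PLosing i k P j' ∧ j < j'
    · obtain ⟨hl1, hgt1⟩ := Nat.find_spec hex
      refine Or.inl ⟨Nat.find hex, hl1, ?_, ?_⟩
      · show σ (Nat.find hex) < if Nat.find hex ≤ j then τ' (Nat.find hex) else Λ
        rw [if_neg (by omega)]
        exact hΛ _ hl1 hgt1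
      · intro j'' hl hlt
        show σ j'' = if j'' ≤ j then τ' j'' else Λ
        by_cases hj'' : j'' ≤ j
        · rw [if_pos hj'']; exact he j'' hl hj''
        · exact absurd ⟨hl, by omega⟩ (Nat.find_min hex hlt)
    · refine Or.inr (fun j' hl => ?_)
      have hjle : j' ≤ j := by
        by_contra h'
        exact hex ⟨j', hl, by omega⟩
      show σ j' = if j' ≤ j then τ' j' else Λ
      rw [if_pos hjle]; exact he j' hl hjle

end AuxOrder

section AuxList

theorem pref_succ (α : ℕ → ℕ) (n : ℕ) : pref α (n + 1) = pref α n ++ [α n] := by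
  simp [pref, List.range_succ]

theorem pref_length (α : ℕ → ℕ) (n : ℕ) : (pref α n).length = n := by
  simp [pref]

theorem pref_prefix (α : ℕ → ℕ) {mm m : ℕ} (h : mm ≤ m) : pref α mm <+: pref α m := by
  induction m with
  | zero =>
    have : mm = 0 := by omega
    subst this; exact List.prefix_refl _
  | succ m ih =>
    rcases Nat.lt_or_ge mm (m + 1) with h' | h'
    · refine (ih (by omega)).trans ?_
      rw [pref_succ]; exact List.prefix_append _ _
    · have : mm = m + 1 := by omega
      subst this; exact List.prefix_refl _

theorem pref_take (α : ℕ → ℕ) {mm m : ℕ} (h : mm ≤ m) :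
    (pref α m).take mm = pref α mm := by
  have h2 := List.prefix_iff_eq_take.mp (pref_prefix α h)
  rw [pref_length] at h2
  exact h2.symm

theorem getD_eq_getElem' {l : List ℕ} {n : ℕ} (h : n < l.length) : l.getD n 0 = l[n] := by
  simp [List.getD_eq_getElem?_getD, List.getElem?_eq_getElem h]

theorem strat_prefix {S : List ℕ → Prop} (h3 : ∀ v (d : ℕ), S (v ++ [d]) → S v) :
    ∀ r w, S (w ++ r) → S w := by
  intro r
  induction r using List.reverseRecOn with
  | nil => intro w h; simpa using h
  | append_singleton r d ih =>
    intro w h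
    rw [← List.append_assoc] at h
    exact ih w (h3 _ d h)

theorem none_extend {T : Label} (hcl : ∀ v (d : ℕ), T v = none → T (v ++ [d]) = none) :
    ∀ r v, T v = none → T (v ++ r) = none := by
  intro r
  induction r using List.reverseRecOn with
  | nil => intro v h; simpa using h
  | append_singleton r d ih =>
    intro v h
    rw [← List.append_assoc]
    exact hcl _ d (ih v h)

theorem step0_of {T : Label} (hcl : ∀ v (d : ℕ), T v = none → T (v ++ [d]) = none)
    (har : ∀ v s, T v = some s → ∀ d : ℕ, (T (v ++ [d]) ≠ none ↔ d < s.arity)) :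
    ∀ v x (j'' : ℕ), T v = some (Sym.pri j'') → v <+: x → v ≠ x → T x ≠ none →
      v ++ [0] <+: x := by
  intro v x j'' hlab hpre hne hx
  obtain ⟨r, rfl⟩ := hpre
  cases r with
  | nil => exact absurd (by simp) hne
  | cons d r' =>
    have hd : T (v ++ [d]) ≠ none := by
      intro h0
      refine hx ?_
      have := none_extend hcl r' (v ++ [d]) h0
      simpa [List.append_assoc] using this
    have hd1 : d < 1 := by simpa [Sym.arity] using (har v _ hlab d).mp hd
    have hd0 : d = 0 := by omega
    subst hd0
    exact ⟨r', by simp⟩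

end AuxList

/-- Nodes that are active with a priority `≤ j`. -/
def ALow (T : Label) (i k : ℕ) (P : Bool) (S' : List ℕ → Prop) (j : ℕ) (w : List ℕ) : Prop :=
  Active T i k P S' w ∧ ∃ j'', T w = some (Sym.pri j'') ∧ j'' ≤ j

/-- Minimal elements of an abstract predicate above a node. -/
def SukOf (A : List ℕ → Prop) (w x : List ℕ) : Prop :=
  A x ∧ w <+: x ∧ ∀ x', A x' → w <+: x' → x' <+: x → x' = x

/-- Structural environment shared between the two signature assignments. -/
structure Env (T : Label) (i k : ℕ) (P : Bool) (S' : List ℕ → Prop) : Prop where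
  pre : ∀ v w, S' v → w <+: v → S' w
  child : ∀ w (j'' : ℕ), S' w → T w = some (Sym.pri j'') → S' (w ++ [0])
  tnone : ∀ w, S' w → T w ≠ none
  step0 : ∀ v x (j'' : ℕ), T v = some (Sym.pri j'') → v <+: x → v ≠ x → T x ≠ none →
    v ++ [0] <+: x
  wf : WellFounded (fun a b => Gg T i k P S' b a)

/-- The data of a "signature-like" assignment: an active-node predicate together
with the two defining clauses of `SigDef` relative to it. -/
structure TDData (T : Label) (i k : ℕ) (P : Bool) (S' : List ℕ → Prop) (j : ℕ)
    (g : List ℕ → ℕ → Ordinal) where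
  A : List ℕ → Prop
  act : ∀ w, A w → Active T i k P S' w
  low : ∀ w (j'' : ℕ), Active T i k P S' w → T w = some (Sym.pri j'') → j'' ≤ j → A w
  g1 : ∀ w (j'' : ℕ), A w → T w = some (Sym.pri j'') → ∀ j', PLosing i k P j' →
      (j' < j'' → g w j' = g (w ++ [0]) j') ∧ (j' = j'' → g w j' = g (w ++ [0]) j'' + 1) ∧
      (j'' < j' → g w j' = 0)
  g2 : ∀ w, S' w → ¬ A w →
      (∀ x, SukOf A w x → sigLe i k P (g x) (g w)) ∧
      (∀ τ, (∀ x, SukOf A w x → sigLe i k P (g x) τ) → sigLe i k P (g w) τ)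

theorem alow_A {T : Label} {i k : ℕ} {P : Bool} {S' : List ℕ → Prop} {j : ℕ}
    {g : List ℕ → ℕ → Ordinal} (D : TDData T i k P S' j g) {w : List ℕ}
    (h : ALow T i k P S' j w) : D.A w := by
  obtain ⟨ha, j'', hl, hle⟩ := h
  exact D.low w j'' ha hl hle

theorem step1 {T : Label} {i k : ℕ} {P : Bool} {S' : List ℕ → Prop} {j : ℕ}
    {g : List ℕ → ℕ → Ordinal} (E : Env T i k P S') (D : TDData T i k P S' j g) :
    ∀ w, S' w → ¬ ALow T i k P S' j w →
      (∀ x, SukOf (ALow T i k P S' j) w x → sigLeBelow i k P j (g x) (g w)) ∧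
      (∀ τ', (∀ x, SukOf (ALow T i k P S' j) w x → sigLeBelow i k P j (g x) τ') →
        sigLeBelow i k P j (g w) τ') := by
  classical
  intro w
  induction w using E.wf.induction with
  | _ w IH =>
  intro hw hnal
  by_cases hA : D.A w
  · obtain ⟨hSw, j'', hlab, hjlos'', hcln⟩ := D.act w hA
    have hjgt : j < j'' := by
      by_contra h
      exact hnal ⟨D.act w hA, j'', hlab, by omega⟩
    have hch : S' (w ++ [0]) := E.child w j'' hw hlab
    have heq0 : sigEqBelow i k P j (g w) (g (w ++ [0])) := fun j' hlos hle =>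
      (D.g1 w j'' hA hlab j' hlos).1 (by omega)
    have hwne : ∀ x, ALow T i k P S' j x → x ≠ w := fun x hx he => hnal (he ▸ hx)
    have hstep : ∀ x, ALow T i k P S' j x → w <+: x → w ++ [0] <+: x := by
      intro x hx hp
      exact E.step0 w x j'' hlab hp (fun he => hwne x hx he.symm) (E.tnone x hx.1.1)
    have hsk : ∀ x, SukOf (ALow T i k P S' j) w x ↔ SukOf (ALow T i k P S' j) (w ++ [0]) x := by
      intro x
      constructor
      · rintro ⟨hax, hp, hmin⟩
        exact ⟨hax, hstep x hax hp, fun x' ha' hp' hp'' =>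
          hmin x' ha' ((List.prefix_append w [0]).trans hp') hp''⟩
      · rintro ⟨hax, hp, hmin⟩
        refine ⟨hax, (List.prefix_append w [0]).trans hp, fun x' ha' hp' hp'' => ?_⟩
        exact hmin x' ha' (hstep x' ha' hp') hp''
    by_cases h0 : ALow T i k P S' j (w ++ [0])
    · have hmem : SukOf (ALow T i k P S' j) w (w ++ [0]) :=
        ⟨h0, List.prefix_append w [0], fun x' ha' hp hp' =>
          hp'.eq_of_length_le (hstep x' ha' hp).length_le⟩
      constructor
      · intro x hx
        have hx0 : w ++ [0] = x := hx.2.2 (w ++ [0]) h0 (List.prefix_append w [0])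
          (hstep x hx.1 hx.2.1)
        rw [← hx0]
        exact leB_of_eqB (eqB_symm heq0)
      · intro τ' hub
        exact eqB_leB_left (eqB_symm heq0) (hub (w ++ [0]) hmem)
    · have hGg : Gg T i k P S' w (w ++ [0]) :=
        ⟨hw, hch, List.prefix_append w [0], fun he => by simp at he,
          ⟨w, D.act w hA, List.prefix_refl w, List.prefix_append w [0]⟩⟩
      obtain ⟨ih1, ih2⟩ := IH (w ++ [0]) hGg hch h0
      constructor
      · intro x hx
        exact eqB_leB_right (eqB_symm heq0) (ih1 x ((hsk x).mp hx))
      · intro τ' hub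
        exact eqB_leB_left (eqB_symm heq0) (ih2 τ' (fun x hx => hub x ((hsk x).mpr hx)))
  · obtain ⟨hub2, hlub2⟩ := D.g2 w hw hA
    have hwneA : ∀ y, D.A y → y ≠ w := fun y hy he => hA (he ▸ hy)
    have extract : ∀ x, D.A x → w <+: x → ∃ y, SukOf D.A w y ∧ y <+: x := by
      intro x hAx hwx
      have hpx : w <+: x.take x.length ∧ D.A (x.take x.length) := by
        simpa [List.take_length] using And.intro hwx hAx
      have hex : ∃ m, w <+: x.take m ∧ D.A (x.take m) := ⟨x.length, hpx⟩
      obtain ⟨hw0, hA0⟩ := Nat.find_spec hex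
      refine ⟨x.take (Nat.find hex), ⟨hA0, hw0, ?_⟩, List.take_prefix _ _⟩
      intro x' hA' hw' hp'
      have hx'x : x' <+: x := hp'.trans (List.take_prefix _ _)
      have hx'take : x' = x.take x'.length := List.prefix_iff_eq_take.mp hx'x
      have hfind : Nat.find hex ≤ x'.length := Nat.find_min' hex
        (by rw [← hx'take]; exact ⟨hw', hA'⟩)
      have hlenle : (x.take (Nat.find hex)).length ≤ x'.length := by
        rw [List.length_take]; omega
      exact hp'.eq_of_length_le hlenle
    have hGgA : ∀ y, SukOf D.A w y → Gg T i k P S' w y := by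
      intro y hy
      exact ⟨hw, (D.act y hy.1).1, hy.2.1, fun he => hwneA y hy.1 he.symm,
        ⟨y, D.act y hy.1, hy.2.1, List.prefix_refl y⟩⟩
    have hsukmem : ∀ y, SukOf D.A w y → ALow T i k P S' j y →
        SukOf (ALow T i k P S' j) w y := by
      intro y hy hAL
      exact ⟨hAL, hy.2.1, fun x0 h0 hp0 hp0' => hy.2.2 x0 (alow_A D h0) hp0 hp0'⟩
    have hsub : ∀ y, SukOf D.A w y → ¬ ALow T i k P S' j y →
        ∀ x, SukOf (ALow T i k P S' j) y x → SukOf (ALow T i k P S' j) w x := by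
      intro y hy hnALy x hx
      refine ⟨hx.1, hy.2.1.trans hx.2.1, fun x0 h0 hp0 hp0' => ?_⟩
      rcases List.prefix_or_prefix_of_prefix hp0' hx.2.1 with h | h
      · exact absurd ((hy.2.2 x0 (alow_A D h0) hp0 h) ▸ h0) hnALy
      · exact hx.2.2 x0 h0 h hp0'
    constructor
    · intro x hx
      obtain ⟨y, hy, hyx⟩ := extract x (alow_A D hx.1) hx.2.1
      by_cases hALy : ALow T i k P S' j y
      · have he : y = x := hx.2.2 y hALy hy.2.1 hyx
        subst he
        exact leB_of_le (hub2 y hy)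
      · have hS'y : S' y := (D.act y hy.1).1
        obtain ⟨ihy1, _⟩ := IH y (hGgA y hy) hS'y hALy
        have h1 : sigLeBelow i k P j (g x) (g y) := by
          refine ihy1 x ⟨hx.1, hyx, fun x0 h0 hp0 hp0' => ?_⟩
          exact hx.2.2 x0 h0 (hy.2.1.trans hp0) hp0'
        exact leB_trans h1 (leB_of_le (hub2 y hy))
    · intro τ' hτ'
      set Λ : Ordinal :=
        (⨆ p : {y : List ℕ // SukOf D.A w y} × Fin (k + 1), g p.1.1 p.2.1) + 1 with hΛdef
      have hbound : ∀ y, SukOf D.A w y → ∀ j', PLosing i k P j' → g y j' < Λ := by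
        intro y hy j' hlos
        have hk' : j' < k + 1 := Nat.lt_succ_of_le hlos.2.1
        have hle := Ordinal.le_iSup
          (fun p : {y : List ℕ // SukOf D.A w y} × Fin (k + 1) => g p.1.1 p.2.1)
          (⟨⟨y, hy⟩, ⟨j', hk'⟩⟩)
        refine lt_of_le_of_lt hle ?_
        rw [hΛdef, Ordinal.add_one_eq_succ]
        exact Order.lt_succ _
      have hLeBy : ∀ y, SukOf D.A w y → sigLeBelow i k P j (g y) τ' := by
        intro y hy
        by_cases hALy : ALow T i k P S' j y
        · exact hτ' y (hsukmem y hy hALy)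
        · obtain ⟨_, ihy2⟩ := IH y (hGgA y hy) ((D.act y hy.1).1) hALy
          exact ihy2 τ' (fun x hx => hτ' x (hsub y hy hALy x hx))
      have hfull : ∀ y, SukOf D.A w y →
          sigLe i k P (g y) (fun j' => if j' ≤ j then τ' j' else Λ) :=
        fun y hy => sigLe_patch (fun j' hlos _ => hbound y hy j' hlos) (hLeBy y hy)
      have hle := hlub2 _ hfull
      have hleB : sigLeBelow i k P j (g w) (fun j' => if j' ≤ j then τ' j' else Λ) :=
        leB_of_le hle
      exact eqB_leB_right (fun j' hlos hle' => by simp [hle']) hleB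

theorem mainEq {T : Label} {i k : ℕ} {P : Bool} {S' : List ℕ → Prop} {j : ℕ}
    {g₁ g₂ : List ℕ → ℕ → Ordinal} (E : Env T i k P S') (D1 : TDData T i k P S' j g₁)
    (D2 : TDData T i k P S' j g₂) :
    ∀ w, S' w → sigEqBelow i k P j (g₁ w) (g₂ w) := by
  classical
  intro w
  induction w using E.wf.induction with
  | _ w IH =>
  intro hw
  by_cases hAL : ALow T i k P S' j w
  · obtain ⟨hact, j'', hlab, hj''le⟩ := hAL
    have hA1 := D1.low w j'' hact hlab hj''le
    have hA2 := D2.low w j'' hact hlab hj''le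
    have hlos'' : PLosing i k P j'' := by
      obtain ⟨_, jy, hlaby, hlosy, _⟩ := hact
      have hje : jy = j'' := by
        have := hlaby.symm.trans hlab
        simpa using this
      exact hje ▸ hlosy
    have hch : S' (w ++ [0]) := E.child w j'' hw hlab
    have hGg : Gg T i k P S' w (w ++ [0]) :=
      ⟨hw, hch, List.prefix_append w [0], fun he => by simp at he,
        ⟨w, hact, List.prefix_refl w, List.prefix_append w [0]⟩⟩
    have ihE := IH (w ++ [0]) hGg hch
    intro j' hlos hle
    rcases lt_trichotomy j' j'' with h | h | h
    · rw [(D1.g1 w j'' hA1 hlab j' hlos).1 h, (D2.g1 w j'' hA2 hlab j' hlos).1 h]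
      exact ihE j' hlos hle
    · rw [(D1.g1 w j'' hA1 hlab j' hlos).2.1 h, (D2.g1 w j'' hA2 hlab j' hlos).2.1 h]
      rw [ihE j'' hlos'' (by omega)]
    · rw [(D1.g1 w j'' hA1 hlab j' hlos).2.2 h, (D2.g1 w j'' hA2 hlab j' hlos).2.2 h]
  · obtain ⟨hub1, hlst1⟩ := step1 E D1 w hw hAL
    obtain ⟨hub2, hlst2⟩ := step1 E D2 w hw hAL
    have hIH : ∀ x, SukOf (ALow T i k P S' j) w x → sigEqBelow i k P j (g₁ x) (g₂ x) := by
      intro x hx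
      have hGg : Gg T i k P S' w x :=
        ⟨hw, hx.1.1.1, hx.2.1, fun he => hAL (he ▸ hx.1),
          ⟨x, hx.1.1, hx.2.1, List.prefix_refl x⟩⟩
      exact IH x hGg hx.1.1.1
    have h12 : sigLeBelow i k P j (g₁ w) (g₂ w) :=
      hlst1 (g₂ w) (fun x hx => eqB_leB_left (eqB_symm (hIH x hx)) (hub2 x hx))
    have h21 : sigLeBelow i k P j (g₂ w) (g₁ w) :=
      hlst2 (g₁ w) (fun x hx => eqB_leB_left (hIH x hx) (hub1 x hx))
    exact leB_antisymm h12 h21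

theorem wfGg (t : Label) (i k : ℕ) (P : Bool) (S : List ℕ → Prop) (u : List ℕ)
    (ht : IsTree t i k) (hS : IsWinningStrategy t P S) (hu : S u)
    (hcleanneg : ∀ w, w <+: u → w ≠ u → t w ≠ some Sym.neg) :
    WellFounded (fun a b => Gg (subtree t u) i k P (fun w => S (u ++ w)) b a) := by
  classical
  have htrans : Transitive (Gg (subtree t u) i k P (fun w => S (u ++ w))) := by
    intro a b c h1 h2
    obtain ⟨ha, hb, hab, hneab, w', hw'⟩ := h1
    obtain ⟨_, hc, hbc, hnebc, _⟩ := h2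
    have hlab : a.length < b.length := by
      rcases Nat.lt_or_ge a.length b.length with h | h
      · exact h
      · exact absurd (hab.eq_of_length_le h) hneab
    have hlbc : b.length < c.length := by
      rcases Nat.lt_or_ge b.length c.length with h | h
      · exact h
      · exact absurd (hbc.eq_of_length_le h) hnebc
    refine ⟨ha, hc, hab.trans hbc, ?_, w', hw'.1, hw'.2.1, hw'.2.2.trans hbc⟩
    intro he
    have := congrArg List.length he
    omega
  haveI : IsIrrefl (List ℕ) (fun a b => Gg (subtree t u) i k P (fun w => S (u ++ w)) b a) :=
    ⟨fun a h => h.2.2.2.1 rfl⟩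
  haveI : IsTrans (List ℕ) (fun a b => Gg (subtree t u) i k P (fun w => S (u ++ w)) b a) :=
    ⟨fun a b c h1 h2 => htrans h2 h1⟩
  haveI : IsStrictOrder (List ℕ)
      (fun a b => Gg (subtree t u) i k P (fun w => S (u ++ w)) b a) := ⟨⟩
  refine RelEmbedding.wellFounded_iff_isEmpty.mpr ⟨fun e => ?_⟩
  set f : ℕ → List ℕ := fun n => e n with hfdef
  have hstep : ∀ n, Gg (subtree t u) i k P (fun w => S (u ++ w)) (f n) (f (n + 1)) :=
    fun n => e.map_rel_iff.mpr (Nat.lt_succ_self n)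
  have h3 : ∀ v (d : ℕ), S (v ++ [d]) → S v := hS.1.2.2.1
  have hSpre : ∀ v w : List ℕ, S v → w <+: v → S w := by
    intro v w hv hw
    obtain ⟨r, hr⟩ := hw
    exact strat_prefix h3 r w (by rw [hr]; exact hv)
  have hpre : ∀ n, f n <+: f (n + 1) := fun n => (hstep n).2.2.1
  have hnef : ∀ n, f n ≠ f (n + 1) := fun n => (hstep n).2.2.2.1
  have hSf : ∀ n, S (u ++ f n) := fun n => (hstep n).1
  choose x hxact hxp1 hxp2 using fun n => (hstep n).2.2.2.2
  have hlen : ∀ n, (f n).length < (f (n + 1)).length := by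
    intro n
    rcases Nat.lt_or_ge (f n).length (f (n + 1)).length with h | h
    · exact h
    · exact absurd ((hpre n).eq_of_length_le h) (hnef n)
  have hmono : ∀ m n, m ≤ n → f m <+: f n := by
    intro m n h
    induction n with
    | zero =>
      have : m = 0 := by omega
      subst this; exact List.prefix_refl _
    | succ n ih =>
      rcases Nat.lt_or_ge m (n + 1) with h' | h'
      · exact (ih (by omega)).trans (hpre n)
      · have : m = n + 1 := by omega
        subst this; exact List.prefix_refl _
  have hlen2 : ∀ n, n ≤ (f n).length := by
    intro n
    induction n with
    | zero => exact Nat.zero_le _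
    | succ n ih => exact Nat.succ_le_of_lt (Nat.lt_of_le_of_lt ih (hlen n))
  set α' : ℕ → ℕ := fun m => (f (m + 1)).getD m 0 with hα'def
  have hprefix_take : ∀ m N, m ≤ (f N).length → pref α' m = (f N).take m := by
    intro m
    induction m with
    | zero => intro N _; simp [pref]
    | succ m ih =>
      intro N hm
      have hmlt : m < (f N).length := by omega
      rw [pref_succ, ih N (by omega)]
      have hval : α' m = (f N)[m]'hmlt := by
        have hlm : m < (f (m + 1)).length := Nat.lt_of_lt_of_le (Nat.lt_succ_self m)
          (hlen2 (m + 1))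
        show (f (m + 1)).getD m 0 = (f N)[m]'hmlt
        rw [getD_eq_getElem' hlm]
        rcases Nat.le_total (m + 1) N with h | h
        · exact (hmono (m + 1) N h).getElem hlm
        · exact ((hmono N (m + 1) h).getElem hmlt).symm
      rw [hval]
      exact List.take_concat_get' _ _ hmlt
  have hαm : ∀ m, S (u ++ pref α' m) := by
    intro m
    have h1 : pref α' m = (f m).take m := hprefix_take m m (hlen2 m)
    refine hSpre (u ++ f m) _ (hSf m) ?_
    rw [h1]
    exact (List.prefix_append_right_inj u).mpr (List.take_prefix _ _)
  set α : ℕ → ℕ := fun m => if m < u.length then u.getD m 0 else α' (m - u.length) with hαdef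
  have hpref1 : ∀ m, m ≤ u.length → pref α m = u.take m := by
    intro m
    induction m with
    | zero => intro _; simp [pref]
    | succ m ih =>
      intro h
      have hm : m < u.length := by omega
      rw [pref_succ, ih (by omega)]
      have hval : α m = u[m]'hm := by
        show (if m < u.length then u.getD m 0 else α' (m - u.length)) = u[m]'hm
        rw [if_pos hm, getD_eq_getElem' hm]
      rw [hval]
      exact List.take_concat_get' _ _ hm
  have hpref2 : ∀ m, pref α (u.length + m) = u ++ pref α' m := by
    intro m
    induction m with
    | zero =>
      simp only [Nat.add_zero]
      rw [hpref1 u.length le_rfl]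
      simp [pref]
    | succ m ih =>
      have hidx : u.length + (m + 1) = (u.length + m) + 1 := by omega
      rw [hidx, pref_succ, ih]
      have hval : α (u.length + m) = α' m := by
        show (if u.length + m < u.length then u.getD (u.length + m) 0
          else α' (u.length + m - u.length)) = α' m
        rw [if_neg (by omega)]
        congr 1
        omega
      rw [hval, pref_succ, List.append_assoc]
  have hplay : IsPlayOf S α := by
    intro n
    rcases Nat.lt_or_ge n u.length with h | h
    · rw [hpref1 n (le_of_lt h)]
      exact hSpre u _ hu (List.take_prefix _ _)
    · have hn : n = u.length + (n - u.length) := by omega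
      rw [hn, hpref2]
      exact hαm _
  obtain ⟨j0, hinf0, hmin0, hpar0⟩ := hS.2 α hplay
  have hxdat := fun n => (hxact n).2
  choose jx hjlab hjlos hjcl using hxdat
  have hxlen : ∀ n, n ≤ (x n).length := fun n =>
    le_trans (hlen2 n) (hxp1 n).length_le
  have hxlenN : ∀ n, (x n).length ≤ (f (n + 1)).length := fun n => (hxp2 n).length_le
  have hprefx : ∀ m n, m ≤ (x n).length → pref α' m = (x n).take m := by
    intro m n hm
    have h1 : pref α' m = (f (n + 1)).take m :=
      hprefix_take m (n + 1) (le_trans hm (hxlenN n))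
    have hxn : x n = (f (n + 1)).take (x n).length := List.prefix_iff_eq_take.mp (hxp2 n)
    rw [h1, hxn, List.take_take, Nat.min_eq_left hm]
  have hxeq : ∀ n, pref α' (x n).length = x n := by
    intro n
    rw [hprefx _ n le_rfl]
    simp
  have hnoneg : ∀ m, t (pref α m) ≠ some Sym.neg := by
    intro m
    rcases Nat.lt_or_ge m u.length with h | h
    · rw [hpref1 m (le_of_lt h)]
      refine hcleanneg _ (List.take_prefix _ _) ?_
      intro he
      have := congrArg List.length he
      simp at this
      omega
    · have hm : m = u.length + (m - u.length) := by omega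
      rw [hm, hpref2]
      intro he
      set m' := m - u.length with hm'def
      have hlt : m' < (x (m' + 1)).length :=
        Nat.lt_of_lt_of_le (Nat.lt_succ_self m') (hxlen (m' + 1))
      have hp : pref α' m' <+: x (m' + 1) := by
        rw [hprefx m' (m' + 1) (le_of_lt hlt)]
        exact List.take_prefix _ _
      have hne2 : pref α' m' ≠ x (m' + 1) := by
        intro h2
        have := congrArg List.length h2
        rw [pref_length] at this
        omega
      exact (hjcl (m' + 1) _ hp hne2).1 he
  have hkept : ∀ m, kept t (pref α m) := by
    intro m
    show tildeCount t (pref α m) % 2 = 0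
    unfold tildeCount
    rw [pref_length]
    have hz : (List.range m).countP
        (fun mm => decide (t ((pref α m).take mm) = some Sym.neg)) = 0 := by
      rw [List.countP_eq_zero]
      intro mm hmm
      simp only [List.mem_range] at hmm
      rw [pref_take α (le_of_lt hmm)]
      simp [hnoneg mm]
    rw [hz]
  have heff : ∀ m jj, t (pref α m) = some (Sym.pri jj) → effPri t (pref α m) = some jj := by
    intro m jj h
    unfold effPri
    rw [h]
    simp [hkept m]
  have heff' : ∀ m jj, effPri t (pref α m) = some jj → t (pref α m) = some (Sym.pri jj) := by
    intro m jj h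
    unfold effPri at h
    cases hl : t (pref α m) with
    | none => rw [hl] at h; simp at h
    | some sy =>
      rw [hl] at h
      cases sy with
      | pri p =>
        simp only [if_pos (hkept m), Option.some.injEq] at h
        rw [h]
      | choice b => simp at h
      | neg => simp at h
  have hjk : ∀ n, jx n < k + 1 := fun n => Nat.lt_succ_of_le (hjlos n).2.1
  obtain ⟨q, hqinf'⟩ := Finite.exists_infinite_fiber (fun n => (⟨jx n, hjk n⟩ : Fin (k + 1)))
  have hqinf : ((fun n => (⟨jx n, hjk n⟩ : Fin (k + 1))) ⁻¹' {q}).Infinite :=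
    Set.infinite_coe_iff.mp hqinf'
  have hqmem : ∀ n, n ∈ ((fun n => (⟨jx n, hjk n⟩ : Fin (k + 1))) ⁻¹' {q}) → jx n = q.val := by
    intro n hn
    have : (⟨jx n, hjk n⟩ : Fin (k + 1)) = q := hn
    simpa [Fin.ext_iff] using this
  have hqlos : PLosing i k P q.val := by
    obtain ⟨n, hn⟩ := hqinf.nonempty
    rw [← hqmem n hn]
    exact hjlos n
  have hIq : InfOften t α q.val := by
    show {m : ℕ | effPri t (pref α m) = some q.val}.Infinite
    apply Set.infinite_of_not_bddAbove
    rintro ⟨b, hb⟩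
    obtain ⟨n, hn, hbn⟩ := hqinf.exists_gt b
    have hmem : (u.length + (x n).length) ∈ {m : ℕ | effPri t (pref α m) = some q.val} := by
      show effPri t (pref α (u.length + (x n).length)) = some q.val
      refine heff _ _ ?_
      rw [hpref2, hxeq n]
      have h2 := hjlab n
      rw [hqmem n hn] at h2
      exact h2
    have hble := hb hmem
    have : n ≤ u.length + (x n).length := le_trans (hxlen n) (Nat.le_add_left _ _)
    omega
  have hj0q : j0 ≤ q.val := by
    by_contra h
    exact hmin0 q.val (by omega) hIq
  have hqj0 : q.val ≤ j0 := by
    obtain ⟨m, hm, hmu⟩ := hinf0.exists_gt u.length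
    obtain ⟨n, hn, hnm⟩ := hqinf.exists_gt (m - u.length)
    set m' := m - u.length with hm'def
    have hlt : m' < (x n).length := lt_of_lt_of_le hnm (hxlen n)
    have hmm : m = u.length + m' := by omega
    have hlab0 : t (pref α m) = some (Sym.pri j0) := heff' m j0 hm
    rw [hmm, hpref2] at hlab0
    have hp : pref α' m' <+: x n := by
      rw [hprefx m' n (le_of_lt hlt)]
      exact List.take_prefix _ _
    have hne2 : pref α' m' ≠ x n := by
      intro h2
      have := congrArg List.length h2
      rw [pref_length] at this
      omega
    have hq' := (hjcl n _ hp hne2).2 j0 hlab0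
    rw [hqmem n hn] at hq'
    exact hq'
  have hq0 : j0 = q.val := le_antisymm hj0q hqj0
  rcases Nat.even_or_odd q.val with he | ho
  · have hP : P = true := hpar0.mp (hq0 ▸ he)
    have hodd : Odd q.val := hqlos.2.2.mpr hP
    exact (Nat.not_odd_iff_even.mpr he) hodd
  · have hP : P = true := hqlos.2.2.mp ho
    have heven : Even j0 := hpar0.mpr hP
    rw [hq0] at heven
    exact (Nat.not_odd_iff_even.mpr heven) ho

/-- Invariance of signature prefixes under passing to subtrees along clean
paths: if no strict ancestor of `u` is labelled `~` or by a priority smaller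
than the `P`-losing number `j`, then `s(ε,Σ↾u)↾j = s(u,Σ)↾j`. -/
theorem sig_prefix_invariant_along_clean_path (t : Label) (i k : ℕ) (P : Bool)
    (S : List ℕ → Prop) (s s' : List ℕ → ℕ → Ordinal) (u : List ℕ) (j : ℕ)
    (ht : IsTree t i k) (hwf : WellFormed t)
    (hS : IsWinningStrategy t P S)
    (hs : SigDef t i k P S s)
    (hs' : SigDef (subtree t u) i k P (fun w => S (u ++ w)) s')
    (hu : S u) (hj : PLosing i k P j)
    (hclean : ∀ w, w <+: u → w ≠ u →
      (t w ≠ some Sym.neg ∧ ∀ j', t w = some (Sym.pri j') → j ≤ j')) :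
    sigEqBelow i k P j (s' []) (s u) := by
  classical
  have hstr := hS.1
  have h3 : ∀ v (d : ℕ), S (v ++ [d]) → S v := hstr.2.2.1
  have hSpre : ∀ v w : List ℕ, S v → w <+: v → S w := by
    intro v w hv hw
    obtain ⟨r, hr⟩ := hw
    exact strat_prefix h3 r w (by rw [hr]; exact hv)
  have hcl_sub : ∀ (v : List ℕ) (d : ℕ), subtree t u v = none →
      subtree t u (v ++ [d]) = none := by
    intro v d h
    have h2 := ht.2.2.1 (u ++ v) d h
    show t (u ++ (v ++ [d])) = none
    rw [← List.append_assoc]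
    exact h2
  have har_sub : ∀ (v : List ℕ) sy, subtree t u v = some sy → ∀ d : ℕ,
      (subtree t u (v ++ [d]) ≠ none ↔ d < sy.arity) := by
    intro v sy hv d
    have h2 := ht.2.1 (u ++ v) sy hv d
    show (t (u ++ (v ++ [d])) ≠ none ↔ d < sy.arity)
    rw [← List.append_assoc]
    exact h2
  have E : Env (subtree t u) i k P (fun w => S (u ++ w)) := by
    refine ⟨?_, ?_, ?_, ?_, ?_⟩
    · intro v w hv hw
      exact hSpre (u ++ v) (u ++ w) hv ((List.prefix_append_right_inj u).mpr hw)
    · intro w j'' hw hlab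
      have hlab' : t (u ++ w) = some (Sym.pri j'') := hlab
      have hctrl : ctrl t (u ++ w) ≠ some P := by
        unfold ctrl
        rw [hlab']
        simp
      have harr : t ((u ++ w) ++ [0]) ≠ none :=
        (ht.2.1 (u ++ w) _ hlab' 0).mpr (by simp [Sym.arity])
      have hres := hstr.2.2.2.2 (u ++ w) 0 hw hctrl harr
      show S (u ++ (w ++ [0]))
      rw [← List.append_assoc]
      exact hres
    · intro w hw
      exact hstr.2.1 (u ++ w) hw
    · exact step0_of hcl_sub har_sub
    · exact wfGg t i k P S u ht hS hu (fun w hp hne => (hclean w hp hne).1)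
  have hA1act : ∀ w, Active t i k P S (u ++ w) →
      Active (subtree t u) i k P (fun w => S (u ++ w)) w := by
    intro w hact
    obtain ⟨hSw, jxx, hlab, hlos, hcl⟩ := hact
    refine ⟨hSw, jxx, hlab, hlos, ?_⟩
    intro v hv hne
    exact hcl (u ++ v) ((List.prefix_append_right_inj u).mpr hv)
      (fun h2 => hne ((List.append_right_inj u).mp h2))
  have hA1low : ∀ w (j'' : ℕ), Active (subtree t u) i k P (fun w => S (u ++ w)) w →
      subtree t u w = some (Sym.pri j'') → j'' ≤ j → Active t i k P S (u ++ w) := by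
    intro w j'' hact hlab hle
    obtain ⟨hSw, jxx, hlabx, hlosx, hcl⟩ := hact
    have hjeq : jxx = j'' := by
      have h2 := hlabx.symm.trans hlab
      simpa using h2
    subst hjeq
    refine ⟨hSw, jxx, hlabx, hlosx, ?_⟩
    intro z hz hne
    rcases List.prefix_or_prefix_of_prefix hz (List.prefix_append u w) with h | h
    · by_cases he : z = u
      · have hwne : w ≠ [] := by
          rintro rfl
          exact hne (by simpa using he)
        have h2 := hcl [] List.nil_prefix (fun hh => hwne hh.symm)
        have hsub0 : subtree t u [] = t u := by
          show t (u ++ []) = t u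
          rw [List.append_nil]
        rw [hsub0] at h2
        rw [he]
        exact h2
      · have h1 := hclean z h he
        refine ⟨h1.1, fun j' hj' => ?_⟩
        have := h1.2 j' hj'
        omega
    · obtain ⟨z', rfl⟩ := h
      have hz' : z' <+: w := (List.prefix_append_right_inj u).mp hz
      have hne' : z' ≠ w := fun h2 => hne (by rw [h2])
      exact hcl z' hz' hne'
  have D1 : TDData (subtree t u) i k P (fun w => S (u ++ w)) j (fun w => s (u ++ w)) :=
    { A := fun w => Active t i k P S (u ++ w)
      act := hA1act
      low := hA1low
      g1 := by
        intro w j'' hA hlab j' hlos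
        have h0 := hs.1 (u ++ w) j'' hA hlab j' hlos
        refine ⟨?_, ?_, h0.2.2⟩
        · intro h
          have h2 := h0.1 h
          rwa [List.append_assoc] at h2
        · intro h
          have h2 := h0.2.1 h
          rwa [List.append_assoc] at h2
      g2 := by
        intro w hw hnA
        obtain ⟨h1, h2⟩ := hs.2 (u ++ w) hw hnA
        constructor
        · intro x hx
          refine h1 (u ++ x) ⟨hx.1, (List.prefix_append_right_inj u).mpr hx.2.1, ?_⟩
          intro z hz hpz hzx
          have huz : u <+: z := (List.prefix_append u w).trans hpz
          obtain ⟨z', rfl⟩ := huz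
          have h4 := hx.2.2 z' hz ((List.prefix_append_right_inj u).mp hpz)
            ((List.prefix_append_right_inj u).mp hzx)
          rw [h4]
        · intro τ hτ
          refine h2 τ (fun z hz => ?_)
          have huz : u <+: z := (List.prefix_append u w).trans hz.2.1
          obtain ⟨z', rfl⟩ := huz
          refine hτ z' ⟨hz.1, (List.prefix_append_right_inj u).mp hz.2.1, ?_⟩
          intro x' hx' hwx' hx'z
          have h4 := hz.2.2 (u ++ x') hx' ((List.prefix_append_right_inj u).mpr hwx')
            ((List.prefix_append_right_inj u).mpr hx'z)
          exact (List.append_right_inj u).mp h4 }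
  have D2 : TDData (subtree t u) i k P (fun w => S (u ++ w)) j s' :=
    { A := Active (subtree t u) i k P (fun w => S (u ++ w))
      act := fun _ h => h
      low := fun _ _ h _ _ => h
      g1 := hs'.1
      g2 := hs'.2 }
  have hmain := mainEq E D2 D1 [] (by simpa using hu)
  have hfin : sigEqBelow i k P j (s' []) (s (u ++ [])) := hmain
  rwa [List.append_nil] at hfin

end UnambSig
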